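/- Recurrence transfer: if p = (p₁, p₂) is a limit point along a subsequence of the shifted random walk S_n' = (Σ_{i≤n}(h_i - E h₀), Σ_{i≤n}(h_i² - E h₀²)), i.e. S_{n_k}' → p, and m_{n_k} → m = (m∥, m⊥) with m⊥ > 0, then n_k(m_{n_k} - m) → (p₁, p₂/(2m⊥) - p₁ m∥/m⊥). -/
import Mathlib


open Real Filter Finset

/-- recurrence transfer. If along a subsequence `(n_k)` the shifted random walk
`S_n' = (Σ_{i<n}(h_i - m∥), Σ_{i<n}(h_i² - (m∥² + m⊥²)))` converges to `p = (p₁, p₂)` and the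
sample mean/standard deviation vector `m_{n_k}` converges to `m = (m∥, m⊥)` with `m⊥ > 0`,
then `n_k (m_{n_k} - m) → (p₁, p₂/(2m⊥) - p₁ m∥/m⊥)`. -/
theorem recurrence_transfer
    (h : ℕ → ℝ) (mpar mperp : ℝ) (hperp : 0 < mperp) (p : ℝ × ℝ)
    (nk : ℕ → ℕ) (hnk : StrictMono nk)
    (hS : Tendsto (fun k =>
        ((∑ i ∈ range (nk k), (h i - mpar),
          ∑ i ∈ range (nk k), ((h i) ^ 2 - (mpar ^ 2 + mperp ^ 2))) : ℝ × ℝ))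
      atTop (nhds p))
    (hmn : Tendsto (fun k =>
        ((((1 : ℝ) / nk k) * ∑ i ∈ range (nk k), h i,
          Real.sqrt (((1 : ℝ) / nk k) * ∑ i ∈ range (nk k), (h i) ^ 2 -
            (((1 : ℝ) / nk k) * ∑ i ∈ range (nk k), h i) ^ 2)) : ℝ × ℝ))
      atTop (nhds (mpar, mperp))) :
    Tendsto (fun k =>
        (((nk k : ℝ) * (((1 : ℝ) / nk k) * ∑ i ∈ range (nk k), h i - mpar),
          (nk k : ℝ) * (Real.sqrt (((1 : ℝ) / nk k) * ∑ i ∈ range (nk k), (h i) ^ 2 -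
            (((1 : ℝ) / nk k) * ∑ i ∈ range (nk k), h i) ^ 2) - mperp)) : ℝ × ℝ))
      atTop (nhds (p.1, p.2 / (2 * mperp) - p.1 * mpar / mperp)) := by
  have hA : Tendsto (fun k => ∑ i ∈ range (nk k), (h i - mpar)) atTop (nhds p.1) :=
    (continuous_fst.tendsto p).comp hS
  have hB : Tendsto (fun k => ∑ i ∈ range (nk k), ((h i) ^ 2 - (mpar ^ 2 + mperp ^ 2)))
      atTop (nhds p.2) := (continuous_snd.tendsto p).comp hS
  have hm1 : Tendsto (fun k => ((1 : ℝ) / nk k) * ∑ i ∈ range (nk k), h i)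
      atTop (nhds mpar) := (continuous_fst.tendsto (mpar, mperp)).comp hmn
  have hsq : Tendsto (fun k => Real.sqrt (((1 : ℝ) / nk k) * ∑ i ∈ range (nk k), (h i) ^ 2 -
      (((1 : ℝ) / nk k) * ∑ i ∈ range (nk k), h i) ^ 2)) atTop (nhds mperp) :=
    (continuous_snd.tendsto (mpar, mperp)).comp hmn
  have hnkT : Tendsto nk atTop atTop := hnk.tendsto_atTop
  have hev1 : ∀ᶠ k in atTop, 1 ≤ nk k := hnkT.eventually_ge_atTop 1
  have hev2 : ∀ᶠ k in atTop,
      mperp / 2 < Real.sqrt (((1 : ℝ) / nk k) * ∑ i ∈ range (nk k), (h i) ^ 2 -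
        (((1 : ℝ) / nk k) * ∑ i ∈ range (nk k), h i) ^ 2) :=
    hsq.eventually (eventually_gt_nhds (by linarith))
  -- first component
  have h1 : Tendsto (fun k => (nk k : ℝ) * (((1 : ℝ) / nk k) * ∑ i ∈ range (nk k), h i - mpar))
      atTop (nhds p.1) := by
    refine hA.congr' ?_
    filter_upwards [hev1] with k hk
    have hn : (nk k : ℝ) ≠ 0 := by positivity
    rw [Finset.sum_sub_distrib, Finset.sum_const, Finset.card_range, nsmul_eq_mul]
    field_simp
  -- second component
  have h2 : Tendsto (fun k => (nk k : ℝ) *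
      (Real.sqrt (((1 : ℝ) / nk k) * ∑ i ∈ range (nk k), (h i) ^ 2 -
        (((1 : ℝ) / nk k) * ∑ i ∈ range (nk k), h i) ^ 2) - mperp))
      atTop (nhds (p.2 / (2 * mperp) - p.1 * mpar / mperp)) := by
    have hden : Tendsto (fun k => Real.sqrt (((1 : ℝ) / nk k) * ∑ i ∈ range (nk k), (h i) ^ 2 -
        (((1 : ℝ) / nk k) * ∑ i ∈ range (nk k), h i) ^ 2) + mperp) atTop
        (nhds (mperp + mperp)) := hsq.add tendsto_const_nhds
    have hnum : Tendsto (fun k => ∑ i ∈ range (nk k), ((h i) ^ 2 - (mpar ^ 2 + mperp ^ 2)) -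
        (∑ i ∈ range (nk k), (h i - mpar)) *
          (((1 : ℝ) / nk k) * ∑ i ∈ range (nk k), h i + mpar)) atTop
        (nhds (p.2 - p.1 * (mpar + mpar))) :=
      hB.sub (hA.mul (hm1.add tendsto_const_nhds))
    have hlim : Tendsto (fun k => (∑ i ∈ range (nk k), ((h i) ^ 2 - (mpar ^ 2 + mperp ^ 2)) -
        (∑ i ∈ range (nk k), (h i - mpar)) *
          (((1 : ℝ) / nk k) * ∑ i ∈ range (nk k), h i + mpar)) /
        (Real.sqrt (((1 : ℝ) / nk k) * ∑ i ∈ range (nk k), (h i) ^ 2 -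
          (((1 : ℝ) / nk k) * ∑ i ∈ range (nk k), h i) ^ 2) + mperp)) atTop
        (nhds ((p.2 - p.1 * (mpar + mpar)) / (mperp + mperp))) :=
      hnum.div hden (by positivity)
    have heq : (p.2 - p.1 * (mpar + mpar)) / (mperp + mperp)
        = p.2 / (2 * mperp) - p.1 * mpar / mperp := by
      field_simp
      ring
    rw [← heq]
    refine hlim.congr' ?_
    filter_upwards [hev1, hev2] with k hk hk2
    rw [Finset.sum_sub_distrib, Finset.sum_sub_distrib, Finset.sum_const, Finset.sum_const,
      Finset.card_range, nsmul_eq_mul, nsmul_eq_mul]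
    set n : ℝ := (nk k : ℝ) with hn_def
    set Sh : ℝ := ∑ i ∈ range (nk k), h i with hSh
    set Sh2 : ℝ := ∑ i ∈ range (nk k), (h i) ^ 2 with hSh2
    set v : ℝ := (1 / n) * Sh2 - ((1 / n) * Sh) ^ 2 with hv_def
    have hn : n ≠ 0 := by positivity
    have hs_pos : 0 < Real.sqrt v := lt_trans (by linarith) hk2
    have hv_pos : 0 < v := by
      by_contra hc
      push_neg at hc
      rw [Real.sqrt_eq_zero_of_nonpos hc] at hs_pos
      exact lt_irrefl 0 hs_pos
    have hs2 : Real.sqrt v ^ 2 = v := Real.sq_sqrt hv_pos.le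
    have hsm : Real.sqrt v + mperp ≠ 0 := by positivity
    rw [eq_comm, eq_div_iff hsm]
    have key : n * (Real.sqrt v - mperp) * (Real.sqrt v + mperp) = n * v - n * mperp ^ 2 := by
      linear_combination n * hs2
    rw [key, hv_def]
    field_simp
    ring
  exact h1.prodMk_nhds h2
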